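/- For every α ∈ (0,1), all positive integers r, d, and every real x, the two polynomial expressions agree: Σ_{i=d}^{r} P(S_r = i) U_{2(i−d)}(x) − Σ_{i=0}^{d−1} P(S_r = i) U_{2(d−i−1)}(x) = Σ_{j=0}^{r+d} [d^{2j}/dt^{2j} ( t^{j−d} (1 − α + α t)^r )]|_{t=−1} · (2x)^{2j}/(2j)!. In particular, evaluating at x = 1 gives the value 2αr − 2d + 1. -/

import Mathlib

/-!
Expanding `(1 - α + α t)^r` binomially, the `2j`-th derivative of `t^(j-d) (1 - α + α t)^r` at
`t = -1` is `(2j)! ∑ᵢ P(S_r = i) (-1)^(i-d+j) C(i-d+j, 2j)`, so `Pa = ∑ᵢ P(S_r = i) E_{i-d}` with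
`E_k(x) = ∑ⱼ (-1)^(k+j) C(k+j, 2j) (2x)^(2j)`, binomial coefficients taken in the generalized sense.
By Pascal's rule `E_k` satisfies the recurrence `E_{k+2} = (4x² - 2) E_{k+1} - E_k` of `U_{2k}` and
agrees with it at `k = 0, 1`, so `E_k = U_{2k}` for every integer `k`; as `U_{-2m-2} = -U_{2m}`, the
sum `∑ᵢ P(S_r = i) U_{2(i-d)}` is `Pt`. At `x = 1`, `U_{2k}(1) = 2k + 1` and `S_r` has mean `rα`.
-/

open Finset Filter Topology

/-- `p α r d n = P(S_{n+r} ≥ S'_n + d)` for independent binomials with success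
probability `α`, given by its explicit combinatorial formula. -/
noncomputable def competeProb (α : ℝ) (r d n : ℕ) : ℝ :=
  ∑ i ∈ Finset.range (n + 1), ∑ j ∈ Finset.Icc (i + d) (n + r),
    ((n + r).choose j : ℝ) * (n.choose i : ℝ) * α ^ (i + j) * (1 - α) ^ (2 * n + r - i - j)

/-- The binomial probability `P(S_r = i) = C(r,i) α^i (1-α)^(r-i)`. -/
noncomputable def binomProb (α : ℝ) (r i : ℕ) : ℝ :=
  (r.choose i : ℝ) * α ^ i * (1 - α) ^ (r - i)

/-- `Q_α(x) = 1 - 4α(1-α)(1-x²)`. -/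
noncomputable def Qa (α x : ℝ) : ℝ := 1 - 4 * α * (1 - α) * (1 - x ^ 2)

/-- `P̃_α^{r,d}(x) = Σ_{i=d}^r P(S_r = i) U_{2(i-d)}(x) - Σ_{i=0}^{d-1} P(S_r = i) U_{2(d-i-1)}(x)`,
where `U_k` are the Chebyshev polynomials of the second kind. -/
noncomputable def Pt (α : ℝ) (r d : ℕ) (x : ℝ) : ℝ :=
  ∑ i ∈ Finset.Icc d r, binomProb α r i *
      (Polynomial.Chebyshev.U ℝ (2 * ((i : ℤ) - d))).eval x
    - ∑ i ∈ Finset.range d, binomProb α r i *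
      (Polynomial.Chebyshev.U ℝ (2 * ((d : ℤ) - i - 1))).eval x

/-- The polynomial `P_α^{r,d}` whose coefficient of `(2x)^(2j)/(2j)!` is the `2j`-th
derivative of `t ↦ t^(j-d) (1 - α + α t)^r` at `t = -1`. -/
noncomputable def Pa (α : ℝ) (r d : ℕ) (x : ℝ) : ℝ :=
  ∑ j ∈ Finset.range (r + d + 1),
    iteratedDeriv (2 * j) (fun t : ℝ => t ^ ((j : ℤ) - (d : ℤ)) * (1 - α + α * t) ^ r) (-1)
      * (2 * x) ^ (2 * j) / ((2 * j).factorial : ℝ)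

namespace Polynomial.Chebyshev

def evenUCoeff (k : ℤ) (j : ℕ) : ℤ := ((k + j).negOnePow : ℤ) * Ring.choose (k + j) (2 * j)

lemma evenUCoeff_eq_zero {k : ℤ} {j : ℕ} (h : k.natAbs < j) : evenUCoeff k j = 0 := by
  obtain ⟨n, hn⟩ : ∃ n : ℕ, k + j = n := ⟨(k + j).toNat, by omega⟩
  rw [evenUCoeff, hn, Ring.choose_natCast, Nat.choose_eq_zero_of_lt (by omega)]
  simp

lemma evenUCoeff_add_two_zero (k : ℤ) :
    evenUCoeff (k + 2) 0 + evenUCoeff k 0 = -2 * evenUCoeff (k + 1) 0 := by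
  simp only [evenUCoeff, Nat.cast_zero, add_zero, mul_zero, Ring.choose_zero_right, mul_one]
  rw [show k + 2 = k + 1 + 1 by ring, Int.negOnePow_succ, Int.negOnePow_succ]
  push_cast
  ring

lemma evenUCoeff_add_two_succ (k : ℤ) (j : ℕ) :
    evenUCoeff (k + 2) (j + 1) + evenUCoeff k (j + 1) =
      evenUCoeff (k + 1) j - 2 * evenUCoeff (k + 1) (j + 1) := by
  set n := k + j + 1
  have h1 := Ring.choose_succ_succ (n + 1) (2 * j + 1)
  have h2 := Ring.choose_succ_succ n (2 * j)
  have h3 := Ring.choose_succ_succ n (2 * j + 1)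
  simp only [evenUCoeff, show 2 * (j + 1) = 2 * j + 1 + 1 by ring]
  rw [show k + 2 + ((j + 1 : ℕ) : ℤ) = n + 1 + 1 by push_cast; ring,
    show k + ((j + 1 : ℕ) : ℤ) = n by push_cast; ring,
    show k + 1 + (j : ℤ) = n by ring,
    show k + 1 + ((j + 1 : ℕ) : ℤ) = n + 1 by push_cast; ring,
    Int.negOnePow_succ, Int.negOnePow_succ]
  push_cast
  linear_combination (n.negOnePow : ℤ) * (h1 + h2 - h3)

variable (R : Type*) [CommRing R]

noncomputable def evenUPoly (k : ℤ) : R[X] :=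
  ∑ j ∈ range (k.natAbs + 1), Polynomial.C (evenUCoeff k j : R) * X ^ j

lemma coeff_evenUPoly (k : ℤ) (j : ℕ) : (evenUPoly R k).coeff j = evenUCoeff k j := by
  rw [evenUPoly, finsetSum_coeff]
  simp only [coeff_C_mul_X_pow, Finset.sum_ite_eq, mem_range]
  split_ifs with h
  · rfl
  · rw [evenUCoeff_eq_zero (by omega), Int.cast_zero]

lemma evenUPoly_add_two (k : ℤ) :
    evenUPoly R (k + 2) = (X - 2) * evenUPoly R (k + 1) - evenUPoly R k := by
  ext (_ | j)
  · have := congrArg (Int.cast : ℤ → R) (evenUCoeff_add_two_zero k)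
    push_cast at this
    simp only [coeff_sub, sub_mul, coeff_X_mul_zero, coeff_ofNat_mul, coeff_evenUPoly]
    linear_combination this
  · have := congrArg (Int.cast : ℤ → R) (evenUCoeff_add_two_succ k j)
    push_cast at this
    simp only [coeff_sub, sub_mul, coeff_X_mul, coeff_ofNat_mul, coeff_evenUPoly]
    linear_combination this

lemma U_two_mul_add_two (k : ℤ) :
    U R (2 * (k + 2)) = ((2 * X) ^ 2 - 2) * U R (2 * (k + 1)) - U R (2 * k) := by
  have e2 := U_add_two R (2 * k)
  have e3 := U_add_two R (2 * k + 1)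
  have e4 := U_add_two R (2 * k + 2)
  rw [show 2 * k + 1 + 1 = 2 * k + 2 by ring, show 2 * k + 1 + 2 = 2 * k + 3 by ring] at e3
  rw [show 2 * k + 2 + 1 = 2 * k + 3 by ring, show 2 * k + 2 + 2 = 2 * k + 4 by ring] at e4
  rw [show 2 * (k + 2) = 2 * k + 4 by ring, show 2 * (k + 1) = 2 * k + 2 by ring]
  linear_combination e4 + 2 * X * e3 + e2

lemma U_two_mul_eq_comp (k : ℤ) : U R (2 * k) = (evenUPoly R k).comp ((2 * X) ^ 2) := by
  induction k using Polynomial.Chebyshev.induct with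
  | zero => simp [evenUPoly, evenUCoeff]
  | one =>
    have h22 : Ring.choose (2 : ℤ) 2 = 1 := by simpa using Ring.choose_natCast (R := ℤ) 2 2
    simp [evenUPoly, evenUCoeff, Finset.sum_range_succ, U_two, h22]
    ring
  | add_two n h1 h0 =>
    rw [U_two_mul_add_two, evenUPoly_add_two, h1, h0]
    simp only [sub_comp, mul_comp, X_comp, ofNat_comp, Nat.cast_ofNat]
  | neg_add_one n h0 h1 =>
    have hU := U_two_mul_add_two R (-n - 1)
    have hG := evenUPoly_add_two R (-n - 1)
    rw [show -(n : ℤ) - 1 + 2 = -n + 1 by ring, show -(n : ℤ) - 1 + 1 = -n by ring] at hU hG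
    rw [h0, h1, hG] at hU
    simp only [sub_comp, mul_comp, X_comp, ofNat_comp, Nat.cast_ofNat] at hU
    linear_combination hU

lemma U_two_mul_eval (k : ℤ) {N : ℕ} (hN : k.natAbs ≤ N) (x : R) :
    (U R (2 * k)).eval x = ∑ j ∈ range (N + 1), (evenUCoeff k j : R) * (2 * x) ^ (2 * j) := by
  rw [U_two_mul_eq_comp, eval_comp, evenUPoly, eval_finsetSum]
  simp only [eval_mul, Polynomial.eval_C, eval_pow, eval_X, eval_ofNat, ← pow_mul]
  refine sum_subset (range_subset_range.2 (by omega)) fun j _ hj => ?_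
  rw [evenUCoeff_eq_zero (by simp at hj; omega), Int.cast_zero, zero_mul]

end Polynomial.Chebyshev

open Polynomial.Chebyshev

section IteratedDerivZpow

variable {𝕜 : Type*} [NontriviallyNormedField 𝕜]

lemma contDiffAt_zpow_of_ne_zero {x : 𝕜} (hx : x ≠ 0) (m : ℤ) {n : WithTop ℕ∞} :
    ContDiffAt 𝕜 n (fun t : 𝕜 => t ^ m) x := by
  obtain ⟨k, rfl | rfl⟩ := m.eq_nat_or_neg
  · simpa using contDiffAt_id.pow k
  · simpa using (contDiffAt_inv 𝕜 hx).pow k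

lemma iteratedDeriv_two_mul_zpow_neg_one (k : ℤ) (j : ℕ) :
    iteratedDeriv (2 * j) (fun t : 𝕜 => t ^ (k + j)) (-1) =
      (2 * j).factorial * evenUCoeff k j := by
  rw [iteratedDeriv_eq_iterate, iter_deriv_zpow, ← descPochhammer_eval_eq_prod_range,
    ← descPochhammer_eval_cast, Polynomial.eval_eq_smeval,
    Ring.descPochhammer_eq_factorial_smul_choose, nsmul_eq_mul,
    show k + j - (2 * j : ℕ) = k + j - 2 * j by push_cast; ring, zpow_sub₀ (by norm_num),
    ← Int.cast_negOnePow, ← Int.cast_negOnePow, Int.negOnePow_two_mul, evenUCoeff]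
  push_cast
  ring

end IteratedDerivZpow

lemma one_sub_add_mul_pow_eq_sum_binomProb (α t : ℝ) (r : ℕ) :
    (1 - α + α * t) ^ r = ∑ i ∈ range (r + 1), binomProb α r i * t ^ i := by
  rw [add_comm, add_pow]
  refine sum_congr rfl fun i _ => ?_
  rw [binomProb]
  ring

lemma binomProb_eq_zero {α : ℝ} {r i : ℕ} (h : r < i) : binomProb α r i = 0 := by
  simp [binomProb, Nat.choose_eq_zero_of_lt h]

lemma binomProb_eq_eval_bernsteinPolynomial (α : ℝ) (r i : ℕ) :
    binomProb α r i = (bernsteinPolynomial ℝ r i).eval α := by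
  simp [binomProb, bernsteinPolynomial]

lemma sum_binomProb (α : ℝ) (r : ℕ) : ∑ i ∈ range (r + 1), binomProb α r i = 1 := by
  simpa [binomProb_eq_eval_bernsteinPolynomial, Polynomial.eval_finsetSum] using
    congrArg (Polynomial.eval α) (bernsteinPolynomial.sum ℝ r)

lemma sum_mul_binomProb (α : ℝ) (r : ℕ) :
    ∑ i ∈ range (r + 1), (i : ℝ) * binomProb α r i = r * α := by
  simpa [binomProb_eq_eval_bernsteinPolynomial, Polynomial.eval_finsetSum] using
    congrArg (Polynomial.eval α) (bernsteinPolynomial.sum_smul ℝ r)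

lemma iteratedDeriv_zpow_mul_pow_eq_sum {x : ℝ} (hx : x ≠ 0) (α : ℝ) (m : ℤ) (r k : ℕ) :
    iteratedDeriv k (fun t => t ^ m * (1 - α + α * t) ^ r) x =
      ∑ i ∈ range (r + 1), binomProb α r i * iteratedDeriv k (fun t => t ^ (m + i)) x := by
  have hexpand : (fun t => t ^ m * (1 - α + α * t) ^ r) =ᶠ[𝓝 x]
      fun t => ∑ i ∈ range (r + 1), binomProb α r i * t ^ (m + i) := by
    filter_upwards [isOpen_ne.mem_nhds hx] with t ht
    rw [one_sub_add_mul_pow_eq_sum_binomProb, mul_sum]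
    refine sum_congr rfl fun i _ => ?_
    rw [zpow_add₀ ht, zpow_natCast]
    ring
  rw [hexpand.iteratedDeriv_eq, iteratedDeriv_fun_sum fun i _ =>
    contDiffAt_const.mul (contDiffAt_zpow_of_ne_zero hx _)]
  exact sum_congr rfl fun i _ => iteratedDeriv_const_mul_field _ _

lemma sum_Icc_add_sum_range {M : Type*} [AddCommMonoid M] {g : ℕ → M} {r : ℕ}
    (hg : ∀ i, r < i → g i = 0) (d : ℕ) :
    ∑ i ∈ Icc d r, g i + ∑ i ∈ range d, g i = ∑ i ∈ range (r + 1), g i := by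
  rw [← sum_union (disjoint_left.2 fun i hi hi' => by simp at hi hi'; omega)]
  symm
  exact sum_subset (fun i hi => by simp at hi ⊢; omega)
    fun i hi hi' => hg i (by simp at hi hi'; omega)

lemma Pt_eq_sum (α : ℝ) (r d : ℕ) (x : ℝ) :
    Pt α r d x = ∑ i ∈ range (r + 1), binomProb α r i * (U ℝ (2 * ((i : ℤ) - d))).eval x := by
  have hreflect : ∀ i : ℕ,
      (U ℝ (2 * ((d : ℤ) - i - 1))).eval x = -(U ℝ (2 * ((i : ℤ) - d))).eval x := by
    intro i
    rw [← Polynomial.eval_neg, ← U_neg_sub_two]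
    ring_nf
  simp only [Pt, hreflect, mul_neg, sum_neg_distrib, sub_neg_eq_add]
  exact sum_Icc_add_sum_range (fun i hi => by rw [binomProb_eq_zero hi, zero_mul]) d

lemma Pa_eq_sum (α : ℝ) (r d : ℕ) (x : ℝ) :
    Pa α r d x = ∑ i ∈ range (r + 1), binomProb α r i * (U ℝ (2 * ((i : ℤ) - d))).eval x := by
  have hcoeff : ∀ j : ℕ, iteratedDeriv (2 * j)
      (fun t : ℝ => t ^ ((j : ℤ) - (d : ℤ)) * (1 - α + α * t) ^ r) (-1) / (2 * j).factorial =
        ∑ i ∈ range (r + 1), binomProb α r i * evenUCoeff ((i : ℤ) - d) j := by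
    intro j
    rw [iteratedDeriv_zpow_mul_pow_eq_sum (by norm_num), sum_div]
    refine sum_congr rfl fun i _ => ?_
    rw [show (j : ℤ) - d + i = ((i : ℤ) - d) + j by ring, iteratedDeriv_two_mul_zpow_neg_one]
    field_simp
  simp_rw [Pa, mul_div_right_comm, hcoeff, sum_mul, mul_assoc]
  rw [sum_comm]
  refine sum_congr rfl fun i hi => ?_
  rw [U_two_mul_eval ℝ _ (N := r + d) (by simp at hi; omega), mul_sum]

theorem Pt_eq_Pa_general (α : ℝ) (r d : ℕ) :
    (∀ x : ℝ, Pt α r d x = Pa α r d x) ∧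
    Pt α r d 1 = 2 * α * r - 2 * d + 1 := by
  refine ⟨fun x => by rw [Pt_eq_sum, Pa_eq_sum], ?_⟩
  simp only [Pt_eq_sum, U_eval_one]
  calc ∑ i ∈ range (r + 1), binomProb α r i * (((2 * ((i : ℤ) - d) : ℤ) : ℝ) + 1)
      = 2 * ∑ i ∈ range (r + 1), (i : ℝ) * binomProb α r i
          - (2 * d - 1) * ∑ i ∈ range (r + 1), binomProb α r i := by
        rw [mul_sum, mul_sum, ← sum_sub_distrib]
        refine sum_congr rfl fun i _ => ?_
        push_cast
        ring
    _ = 2 * α * r - 2 * d + 1 := by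
        rw [sum_mul_binomProb, sum_binomProb]
        ring

theorem Pt_eq_Pa (α : ℝ) (hα : α ∈ Set.Ioo (0 : ℝ) 1) (r d : ℕ) (hr : 1 ≤ r) (hd : 1 ≤ d) :
    (∀ x : ℝ, Pt α r d x = Pa α r d x) ∧
    Pt α r d 1 = 2 * α * r - 2 * d + 1 :=
  Pt_eq_Pa_general α r d
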